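/- For all integers p and q with 2 ≤ p ≤ q, there exists a connected graph G with fix(G) = p and fxd(G) = q. -/

import Mathlib

open SimpleGraph

variable {V : Type*}

/-- A set `F` of vertices is a fixing set: the only automorphism fixing
every vertex of `F` pointwise is the identity. -/
def IsFixingSet (G : SimpleGraph V) (F : Set V) : Prop :=
  ∀ g : G ≃g G, (∀ v ∈ F, g v = v) → ∀ v, g v = v

/-- The fixing number: minimum cardinality of a fixing set. -/
noncomputable def fixNum [Fintype V] (G : SimpleGraph V) : ℕ :=
  sInf {k | ∃ F : Finset V, F.card = k ∧ IsFixingSet G ↑F}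

/-- The fixed number: minimum `k` such that every `k`-subset is a fixing set. -/
noncomputable def fxdNum [Fintype V] (G : SimpleGraph V) : ℕ :=
  sInf {k | ∀ F : Finset V, F.card = k → IsFixingSet G ↑F}

lemma fix_last {G : SimpleGraph V} (g : G ≃g G) (a : V) (h : ∀ v, v ≠ a → g v = v) :
    g a = a := by
  by_contra hne
  exact hne (g.injective (h _ hne))

lemma isFixingSet_superset {G : SimpleGraph V} {F F' : Set V} (h : IsFixingSet G F)
    (hsub : F ⊆ F') : IsFixingSet G F' :=
  fun g hg => h g (fun v hv => hg v (hsub hv))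

def swapIso [DecidableEq V] (G : SimpleGraph V) (a b : V)
    (hab : ∀ x, x ≠ a → x ≠ b → (G.Adj a x ↔ G.Adj b x)) : G ≃g G where
  toEquiv := Equiv.swap a b
  map_rel_iff' := by
    have key : ∀ u v, G.Adj u v → G.Adj (Equiv.swap a b u) (Equiv.swap a b v) := by
      intro u v huv
      rcases eq_or_ne u a with rfl | hua
      · rw [Equiv.swap_apply_left]
        rcases eq_or_ne v u with rfl | hvu
        · exact absurd huv (G.irrefl)
        · rcases eq_or_ne v b with rfl | hvb
          · rw [Equiv.swap_apply_right]; exact huv.symm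
          · rw [Equiv.swap_apply_of_ne_of_ne hvu hvb]
            exact (hab v (Ne.symm huv.ne) hvb).mp huv
      · rcases eq_or_ne u b with rfl | hub
        · rw [Equiv.swap_apply_right]
          rcases eq_or_ne v a with rfl | hva
          · rw [Equiv.swap_apply_left]; exact huv.symm
          · rcases eq_or_ne v u with rfl | hvu
            · exact absurd huv (G.irrefl)
            · rw [Equiv.swap_apply_of_ne_of_ne hva hvu]
              exact (hab v hva hvu).mpr huv
        · rw [Equiv.swap_apply_of_ne_of_ne hua hub]
          rcases eq_or_ne v a with rfl | hva
          · rw [Equiv.swap_apply_left]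
            exact ((hab u hua hub).mp huv.symm).symm
          · rcases eq_or_ne v b with rfl | hvb
            · rw [Equiv.swap_apply_right]
              exact ((hab u hua hub).mpr huv.symm).symm
            · rw [Equiv.swap_apply_of_ne_of_ne hva hvb]; exact huv
    intro u v
    refine ⟨fun h => ?_, key u v⟩
    have := key _ _ h
    simpa using this

@[simp] lemma swapIso_apply [DecidableEq V] (G : SimpleGraph V) (a b : V)
    (hab : ∀ x, x ≠ a → x ≠ b → (G.Adj a x ↔ G.Adj b x)) (v : V) :
    swapIso G a b hab v = Equiv.swap a b v := rfl

lemma main_lemma [Fintype V] [DecidableEq V] (G : SimpleGraph V) (p q : ℕ)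
    (hp : 2 ≤ p) (hpq : p ≤ q)
    (T : Finset V) (hT : T.card = p + 1)
    (hcard : Fintype.card V = q + 1)
    (htwin : ∀ a ∈ T, ∀ b ∈ T, a ≠ b → ∀ x, x ≠ a → x ≠ b → (G.Adj a x ↔ G.Adj b x))
    (hfix : ∀ g : G ≃g G, ∀ v ∉ T, g v = v) :
    fixNum G = p ∧ fxdNum G = q := by
  have nonfix : ∀ F : Finset V, (∃ a ∈ T, ∃ b ∈ T, a ≠ b ∧ a ∉ F ∧ b ∉ F) →
      ¬ IsFixingSet G ↑F := by
    rintro F ⟨a, ha, b, hb, hab, haF, hbF⟩ hfx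
    have hga := hfx (swapIso G a b (htwin a ha b hb hab)) ?_ a
    · rw [swapIso_apply, Equiv.swap_apply_left] at hga
      exact hab hga.symm
    · intro v hv
      rw [swapIso_apply, Equiv.swap_apply_of_ne_of_ne]
      · rintro rfl; exact haF hv
      · rintro rfl; exact hbF hv
  obtain ⟨a0, ha0⟩ : T.Nonempty := by rw [← Finset.card_pos, hT]; omega
  have hfixmem : p ∈ {k | ∃ F : Finset V, F.card = k ∧ IsFixingSet G ↑F} := by
    refine ⟨T.erase a0, by rw [Finset.card_erase_of_mem ha0, hT]; omega, ?_⟩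
    intro g hg
    have hbase : ∀ v, v ≠ a0 → g v = v := by
      intro v hv
      by_cases hvT : v ∈ T
      · exact hg v (Finset.mem_coe.mpr (Finset.mem_erase.mpr ⟨hv, hvT⟩))
      · exact hfix g v hvT
    intro v
    rcases eq_or_ne v a0 with rfl | hv
    · exact fix_last g v hbase
    · exact hbase v hv
  constructor
  · apply le_antisymm (Nat.sInf_le hfixmem)
    apply le_csInf ⟨p, hfixmem⟩
    rintro k ⟨F, hFcard, hFfix⟩
    by_contra hlt
    push_neg at hlt
    have hsd : 1 < (T \ F).card := by
      have := Finset.le_card_sdiff F T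
      omega
    obtain ⟨a, ha, b, hb, hab⟩ := Finset.one_lt_card.mp hsd
    rw [Finset.mem_sdiff] at ha hb
    exact nonfix F ⟨a, ha.1, b, hb.1, hab, ha.2, hb.2⟩ hFfix
  · have hq : q ∈ {k | ∀ F : Finset V, F.card = k → IsFixingSet G ↑F} := by
      intro F hFcard
      have hcompl : Fᶜ.card = 1 := by rw [Finset.card_compl, hFcard, hcard]; omega
      obtain ⟨a, haeq⟩ := Finset.card_eq_one.mp hcompl
      intro g hg
      have hbase : ∀ v, v ≠ a → g v = v := by
        intro v hv
        by_cases hvF : v ∈ F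
        · exact hg v hvF
        · exfalso
          have : v ∈ Fᶜ := Finset.mem_compl.mpr hvF
          rw [haeq, Finset.mem_singleton] at this
          exact hv this
      intro v
      rcases eq_or_ne v a with rfl | hv
      · exact fix_last g v hbase
      · exact hbase v hv
    apply le_antisymm (Nat.sInf_le hq)
    apply le_csInf ⟨q, hq⟩
    intro k hk
    by_contra hlt
    push_neg at hlt
    -- climb from k to q-1
    have climb : ∀ d, (k + d) ∈ {k | ∀ F : Finset V, F.card = k → IsFixingSet G ↑F} := by
      intro d
      induction d with
      | zero => exact hk
      | succ d ih =>
        intro F hFcard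
        obtain ⟨x, hx⟩ : F.Nonempty := by rw [← Finset.card_pos]; omega
        have h1 : (F.erase x).card = k + d := by rw [Finset.card_erase_of_mem hx]; omega
        refine isFixingSet_superset (ih _ h1) ?_
        intro v hv
        exact Finset.mem_coe.mpr (Finset.mem_of_mem_erase (Finset.mem_coe.mp hv))
    have hq1 := climb (q - 1 - k)
    obtain ⟨a, ha, b, hb, hab⟩ := Finset.one_lt_card.mp (show 1 < T.card by omega)
    have hFc : ({a, b}ᶜ : Finset V).card = q - 1 := by
      rw [Finset.card_compl, Finset.card_pair hab, hcard]
      omega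
    refine nonfix ({a, b}ᶜ) ⟨a, ha, b, hb, hab, ?_, ?_⟩ ?_
    · simp
    · simp
    · have : k + (q - 1 - k) = q - 1 := by omega
      rw [this] at hq1
      exact hq1 _ hFc

/-- Star graph on `Fin (k+2)` with hub `0`. -/
def StarG (k : ℕ) : SimpleGraph (Fin (k + 2)) where
  Adj i j := i ≠ j ∧ (i = 0 ∨ j = 0)
  symm := by constructor; rintro i j ⟨h1, h2⟩; exact ⟨h1.symm, h2.symm⟩
  loopless := by constructor; rintro i ⟨h1, _⟩; exact h1 rfl

lemma starG_connected (k : ℕ) : (StarG k).Connected := by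
  rw [connected_iff]
  refine ⟨fun u v => ?_, ⟨0⟩⟩
  have hub : ∀ w : Fin (k+2), (StarG k).Reachable w 0 := by
    intro w
    rcases eq_or_ne w 0 with rfl | hw
    · exact Reachable.refl _
    · exact Adj.reachable ⟨hw, Or.inr rfl⟩
  exact (hub u).trans (hub v).symm

lemma starG_fix (k : ℕ) (hk : 2 ≤ k) (g : StarG k ≃g StarG k) : g 0 = 0 := by
  by_contra hne
  have h1 : (StarG k).Adj 0 1 := ⟨by simp [Fin.ext_iff], Or.inl rfl⟩
  have h2 : (StarG k).Adj 0 ⟨2, by omega⟩ := ⟨by simp [Fin.ext_iff], Or.inl rfl⟩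
  have hg1 : (StarG k).Adj (g 0) (g 1) := g.map_adj_iff.mpr h1
  have hg2 : (StarG k).Adj (g 0) (g ⟨2, by omega⟩) := g.map_adj_iff.mpr h2
  have e1 : g 1 = 0 := by
    rcases hg1.2 with h | h
    · exact absurd h hne
    · exact h
  have e2 : g ⟨2, by omega⟩ = 0 := by
    rcases hg2.2 with h | h
    · exact absurd h hne
    · exact h
  have := g.injective (e1.trans e2.symm)
  simp [Fin.ext_iff] at this



/-- Lollipop: clique on `Fin (k+4)` with a path `Fin (m+1)` attached at clique vertex `0`. -/
def LolliG (k m : ℕ) : SimpleGraph (Fin (k + 4) ⊕ Fin (m + 1)) where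
  Adj x y :=
    match x, y with
    | Sum.inl i, Sum.inl j => i ≠ j
    | Sum.inl i, Sum.inr j => i.val = 0 ∧ j.val = 0
    | Sum.inr j, Sum.inl i => i.val = 0 ∧ j.val = 0
    | Sum.inr j, Sum.inr l => j.val + 1 = l.val ∨ l.val + 1 = j.val
  symm := by
    constructor
    rintro (i | j) (i' | j') h
    · exact Ne.symm h
    · exact h
    · exact h
    · tauto
  loopless := by
    constructor
    rintro (i | j) h
    · exact h rfl
    · rcases h with h | h <;> omega

lemma lolliG_adj_inl_inl {k m : ℕ} {i j : Fin (k+4)} :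
    (LolliG k m).Adj (Sum.inl i) (Sum.inl j) ↔ i ≠ j := Iff.rfl

lemma lolliG_adj_inl_inr {k m : ℕ} {i : Fin (k+4)} {j : Fin (m+1)} :
    (LolliG k m).Adj (Sum.inl i) (Sum.inr j) ↔ i.val = 0 ∧ j.val = 0 := Iff.rfl

lemma lolliG_adj_inr_inl {k m : ℕ} {i : Fin (k+4)} {j : Fin (m+1)} :
    (LolliG k m).Adj (Sum.inr j) (Sum.inl i) ↔ i.val = 0 ∧ j.val = 0 := Iff.rfl

lemma lolliG_adj_inr_inr {k m : ℕ} {j l : Fin (m+1)} :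
    (LolliG k m).Adj (Sum.inr j) (Sum.inr l) ↔ j.val + 1 = l.val ∨ l.val + 1 = j.val := Iff.rfl

lemma lolliG_connected (k m : ℕ) : (LolliG k m).Connected := by
  rw [connected_iff]
  refine ⟨fun u v => ?_, ⟨Sum.inl 0⟩⟩
  have hub : ∀ w, (LolliG k m).Reachable w (Sum.inl 0) := by
    have hr : ∀ n (hn : n < m + 1),
        (LolliG k m).Reachable (Sum.inr ⟨n, hn⟩) (Sum.inl 0) := by
      intro n
      induction n with
      | zero => exact fun hn => Adj.reachable (by rw [lolliG_adj_inr_inl]; exact ⟨rfl, rfl⟩)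
      | succ n ih =>
        intro hn
        have h1 : (LolliG k m).Adj (Sum.inr ⟨n+1, hn⟩) (Sum.inr ⟨n, by omega⟩) := by
          rw [lolliG_adj_inr_inr]; right; rfl
        exact (Adj.reachable h1).trans (ih (by omega))
    rintro (i | j)
    · rcases eq_or_ne i 0 with rfl | hi
      · exact Reachable.refl _
      · exact Adj.reachable (by rw [lolliG_adj_inl_inl]; exact hi)
    · have := hr j.val j.isLt
      simpa using this
  exact (hub u).trans (hub v).symm

lemma lolliG_notri (k m : ℕ) (j : Fin (m+1)) :
    ¬ ∃ x y, (LolliG k m).Adj (Sum.inr j) x ∧ (LolliG k m).Adj (Sum.inr j) y ∧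
      (LolliG k m).Adj x y := by
  rintro ⟨(i | l), (i' | l'), h1, h2, h3⟩
  · rw [lolliG_adj_inr_inl] at h1 h2
    rw [lolliG_adj_inl_inl] at h3
    exact h3 (Fin.ext (h1.1.trans h2.1.symm))
  · rw [lolliG_adj_inr_inl] at h1
    rw [lolliG_adj_inr_inr] at h2
    rw [lolliG_adj_inl_inr] at h3
    omega
  · rw [lolliG_adj_inr_inr] at h1
    rw [lolliG_adj_inr_inl] at h2
    rw [lolliG_adj_inr_inl] at h3
    omega
  · rw [lolliG_adj_inr_inr] at h1 h2 h3
    omega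

lemma lolliG_tri (k m : ℕ) (i : Fin (k+4)) :
    ∃ x y, (LolliG k m).Adj (Sum.inl i) x ∧ (LolliG k m).Adj (Sum.inl i) y ∧
      (LolliG k m).Adj x y := by
  refine ⟨Sum.inl ⟨if i.val = 0 then 1 else 0, by split_ifs <;> omega⟩,
    Sum.inl ⟨if i.val = 2 then 1 else 2, by split_ifs <;> omega⟩, ?_, ?_, ?_⟩ <;>
    rw [lolliG_adj_inl_inl] <;>
    · intro h
      rw [Fin.ext_iff] at h
      simp only [Fin.val_mk] at h
      split_ifs at h <;> omega

lemma lolliG_inr_fixed (k m : ℕ) (g : LolliG k m ≃g LolliG k m) :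
    (∀ j, g (Sum.inr j) = Sum.inr j) ∧ g (Sum.inl 0) = Sum.inl 0 := by
  -- images of inr are inr
  have hinr : ∀ (g : LolliG k m ≃g LolliG k m) (j : Fin (m+1)),
      ∃ j', g (Sum.inr j) = Sum.inr j' := by
    intro g j
    cases h : g (Sum.inr j) with
    | inr j' => exact ⟨j', rfl⟩
    | inl i =>
      exfalso
      obtain ⟨x, y, h1, h2, h3⟩ := lolliG_tri k m i
      apply lolliG_notri k m j
      refine ⟨g.symm x, g.symm y, ?_, ?_, ?_⟩
      · rw [← g.map_adj_iff, g.apply_symm_apply, h]; exact h1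
      · rw [← g.map_adj_iff, g.apply_symm_apply, h]; exact h2
      · rw [← g.symm.map_adj_iff] at h3; exact h3
  have hinl : ∀ i, ∃ i', g (Sum.inl i) = Sum.inl i' := by
    intro i
    cases h : g (Sum.inl i) with
    | inl i' => exact ⟨i', rfl⟩
    | inr j' =>
      exfalso
      obtain ⟨j'', hj⟩ := hinr g.symm j'
      rw [← h, g.symm_apply_apply] at hj
      exact (by simp at hj : False)
  -- the hub and path start
  have hadj0 : (LolliG k m).Adj (Sum.inl 0) (Sum.inr 0) := by
    rw [lolliG_adj_inl_inr]; exact ⟨rfl, rfl⟩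
  obtain ⟨i0, hi0⟩ := hinl 0
  obtain ⟨j0, hj0⟩ := hinr g 0
  have hadj : (LolliG k m).Adj (Sum.inl i0) (Sum.inr j0) := by
    rw [← hi0, ← hj0]; exact g.map_adj_iff.mpr hadj0
  rw [lolliG_adj_inl_inr] at hadj
  have hc : g (Sum.inl 0) = Sum.inl 0 := by rw [hi0]; congr 1; exact Fin.ext hadj.1
  have hr0 : g (Sum.inr 0) = Sum.inr 0 := by rw [hj0]; congr 1; exact Fin.ext hadj.2
  -- path induction
  have key : ∀ n (hn : n < m + 1), g (Sum.inr ⟨n, hn⟩) = Sum.inr ⟨n, hn⟩ := by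
    intro n
    induction n using Nat.strong_induction_on with
    | _ n ih =>
      intro hn
      match n with
      | 0 => simpa [Fin.ext_iff] using hr0
      | Nat.succ n =>
        obtain ⟨⟨l, hl⟩, hgl⟩ := hinr g ⟨n+1, hn⟩
        have hstep : (LolliG k m).Adj (Sum.inr (⟨n+1, hn⟩ : Fin (m+1)))
            (Sum.inr ⟨n, by omega⟩) := by
          rw [lolliG_adj_inr_inr]; right; rfl
        have := g.map_adj_iff.mpr hstep
        rw [hgl, ih n (by omega) (by omega)] at this
        rw [lolliG_adj_inr_inr] at this
        simp only [Fin.val_mk] at this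
        rcases this with h | h
        · -- l + 1 = n : l = n - 1, contradiction with injectivity
          exfalso
          subst h
          have hprev := ih l (by omega) (by omega)
          have heq := g.injective (hgl.trans hprev.symm)
          simp [Fin.ext_iff] at heq
          omega
        · rw [hgl]
          congr 1
          exact Fin.ext (by simp; omega)
  exact ⟨fun j => by have := key j.val j.isLt; simpa using this, hc⟩

theorem stmt10 (p q : ℕ) (hp : 2 ≤ p) (hpq : p ≤ q) :
    ∃ (V : Type) (inst : Fintype V) (G : SimpleGraph V),
      G.Connected ∧ @fixNum V inst G = p ∧ @fxdNum V inst G = q := by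
  rcases eq_or_lt_of_le hpq with rfl | hlt
  · -- q = p : complete graph on p+1 vertices
    refine ⟨Fin (p + 1), inferInstance, ⊤, ?_, ?_⟩
    · have : Nonempty (Fin (p+1)) := ⟨⟨0, by omega⟩⟩
      exact connected_top
    · exact main_lemma ⊤ p p hp le_rfl Finset.univ (by simp) (by simp)
        (fun a _ b _ hab x hxa hxb => by
          simp only [top_adj]
          exact iff_of_true (Ne.symm hxa) (Ne.symm hxb))
        (fun g v hv => absurd (Finset.mem_univ v) hv)
  rcases eq_or_lt_of_le (show p + 1 ≤ q from hlt) with rfl | hlt2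
  · -- q = p + 1 : star
    refine ⟨Fin (p + 2), inferInstance, StarG p, starG_connected p, ?_⟩
    refine main_lemma (StarG p) p (p+1) hp (by omega) (Finset.univ.erase 0) ?_ (by simp) ?_ ?_
    · rw [Finset.card_erase_of_mem (Finset.mem_univ _)]
      simp
    · intro a ha b hb hab x hxa hxb
      rw [Finset.mem_erase] at ha hb
      show (a ≠ x ∧ (a = 0 ∨ x = 0)) ↔ (b ≠ x ∧ (b = 0 ∨ x = 0))
      constructor
      · rintro ⟨-, h | h⟩
        · exact absurd h ha.1
        · exact ⟨fun e => hb.1 (e.trans h), Or.inr h⟩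
      · rintro ⟨-, h | h⟩
        · exact absurd h hb.1
        · exact ⟨fun e => ha.1 (e.trans h), Or.inr h⟩
    · intro g v hv
      rw [Finset.mem_erase] at hv
      push_neg at hv
      have hv0 : v = 0 := by
        by_contra h
        exact (hv h) (Finset.mem_univ v)
      subst hv0
      exact starG_fix p hp g
  · -- q ≥ p + 2 : lollipop
    obtain ⟨k, rfl⟩ : ∃ k, p = k + 2 := ⟨p - 2, by omega⟩
    obtain ⟨m, rfl⟩ : ∃ m, q = k + 4 + m := ⟨q - k - 4, by omega⟩
    refine ⟨Fin (k + 4) ⊕ Fin (m + 1), inferInstance, LolliG k m, lolliG_connected k m, ?_⟩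
    refine main_lemma (LolliG k m) (k + 2) (k + 4 + m) hp (by omega)
      ((Finset.univ.erase (0 : Fin (k+4))).image Sum.inl) ?_ (by simp; omega) ?_ ?_
    · rw [Finset.card_image_of_injective _ Sum.inl_injective,
        Finset.card_erase_of_mem (Finset.mem_univ _)]
      simp
    · intro a ha b hb hab x hxa hxb
      rw [Finset.mem_image] at ha hb
      obtain ⟨i, hi, rfl⟩ := ha
      obtain ⟨i', hi', rfl⟩ := hb
      rw [Finset.mem_erase] at hi hi'
      rcases x with n | n
      · rw [lolliG_adj_inl_inl, lolliG_adj_inl_inl]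
        exact iff_of_true (fun h => hxa (congrArg Sum.inl h.symm))
          (fun h => hxb (congrArg Sum.inl h.symm))
      · rw [lolliG_adj_inl_inr, lolliG_adj_inl_inr]
        exact iff_of_false (fun h => hi.1 (Fin.ext h.1)) (fun h => hi'.1 (Fin.ext h.1))
    · intro g v hv
      rcases v with i | j
      · rcases eq_or_ne i 0 with rfl | hi
        · exact (lolliG_inr_fixed k m g).2
        · exact absurd (Finset.mem_image.mpr ⟨i, Finset.mem_erase.mpr ⟨hi, Finset.mem_univ _⟩, rfl⟩) hv
      · exact (lolliG_inr_fixed k m g).1 j
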